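/- For a rooted binary phylogenetic network N on X with inheritance probabilities and |T(N)| equal to 2^k (k the number of reticulation nodes), for every S ⊆ X the inheritance-weighted phylogenetic net diversity equals the inheritance-weighted average embedded phylogenetic diversity: PND^inh(S) = Σ_{T∈T(N)} P(T)·PD_T(S). -/

import Mathlib

open Finset
open scoped Classical

/-- `IsPath E u v p` : `p` is a list of consecutive edges of `E` leading from `u` to `v`. -/
def IsPath {V : Type*} (E : Finset (V × V)) : V → V → List (V × V) → Prop
  | u, v, [] => u = v
  | u, v, e :: p => e ∈ E ∧ e.1 = u ∧ IsPath E e.2 v p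

/-- The vertex `u` lies on the path `p` starting at the vertex `a`. -/
def MemPath {V : Type*} (u a : V) (p : List (V × V)) : Prop :=
  u = a ∨ ∃ e ∈ p, e.2 = u

/-- indegree of a vertex. -/
def inDeg {V : Type*} [DecidableEq V] (E : Finset (V × V)) (v : V) : ℕ :=
  (E.filter fun e => e.2 = v).card

/-- outdegree of a vertex. -/
def outDeg {V : Type*} [DecidableEq V] (E : Finset (V × V)) (v : V) : ℕ :=
  (E.filter fun e => e.1 = v).card

/-- All lists of length `n` with entries in `s`. -/
def listsOf {V : Type*} [DecidableEq V] (s : Finset (V × V)) : ℕ → Finset (List (V × V))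
  | 0 => {[]}
  | n + 1 => s.biUnion fun e => (listsOf s n).image (e :: ·)

/-- The (finite) set of all directed paths from `u` to `v` in an acyclic digraph. -/
noncomputable def allPaths {V : Type*} [Fintype V] [DecidableEq V]
    (E : Finset (V × V)) (u v : V) : Finset (List (V × V)) :=
  ((Finset.range (Fintype.card V + 1)).biUnion (listsOf E)).filter (IsPath E u v)

/-- A rooted binary phylogenetic network on the taxon set `X`, with vertex set `V`,
edge lengths and inheritance probabilities. -/
structure PhyloNetwork (V X : Type*) [Fintype V] [DecidableEq V] [Fintype X] where
  E : Finset (V × V)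
  root : V
  len : V × V → ℝ
  prob : V × V → ℝ
  leafOf : X → V
  leafOf_inj : Function.Injective leafOf
  root_in : inDeg E root = 0
  root_out : outDeg E root = 2
  leaf_iff : ∀ v, outDeg E v = 0 ↔ ∃ x, leafOf x = v
  leaf_in : ∀ x, inDeg E (leafOf x) = 1
  internal : ∀ v, v ≠ root → outDeg E v ≠ 0 →
      (inDeg E v = 1 ∧ outDeg E v = 2) ∨ (inDeg E v = 2 ∧ outDeg E v = 1)
  reach : ∀ v, ∃ p, IsPath E root v p
  acyclic : ∀ (v : V) (p : List (V × V)), p ≠ [] → ¬ IsPath E v v p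
  len_nonneg : ∀ e ∈ E, 0 ≤ len e
  len_pos_tree : ∀ e ∈ E, inDeg E e.2 ≤ 1 → 0 < len e
  len_retic : ∀ e ∈ E, inDeg E e.2 = 2 → len e = 0
  prob_tree : ∀ e ∈ E, inDeg E e.2 ≤ 1 → prob e = 1
  prob_pos : ∀ e ∈ E, 0 < prob e
  prob_lt_one : ∀ e ∈ E, inDeg E e.2 = 2 → prob e < 1
  prob_sum : ∀ v, inDeg E v = 2 → ∑ e ∈ E.filter (fun e => e.2 = v), prob e = 1

namespace PhyloNetwork

variable {V X : Type*} [Fintype V] [DecidableEq V] [Fintype X] [DecidableEq X]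
variable (N : PhyloNetwork V X)

/-- Probability of a directed path: the product of the probabilities of its edges. -/
noncomputable def pathProb (p : List (V × V)) : ℝ := (p.map N.prob).prod

/-- Total weight (sum of branch lengths) of a set of edges. -/
noncomputable def weight (A : Finset (V × V)) : ℝ := ∑ e ∈ A, N.len e

/-- A switching keeps exactly one incoming edge of every non-root vertex, i.e. it
deletes exactly one of the two incoming reticulation edges of each reticulation node
and keeps all tree edges. -/
def IsSwitching (F : Finset (V × V)) : Prop :=
  F ⊆ N.E ∧ ∀ v, v ≠ N.root → (F.filter fun e => e.2 = v).card = 1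

/-- The switching yields a phylogenetic `X`-tree: every dead end is a labeled leaf. -/
def IsValidSwitching (F : Finset (V × V)) : Prop :=
  N.IsSwitching F ∧ ∀ v, outDeg F v = 0 → ∃ x, N.leafOf x = v

/-- The (multi)set `T(N)` of phylogenetic `X`-trees displayed by `N`, each tree being
encoded by the switching producing it. -/
noncomputable def displayed : Finset (Finset (V × V)) :=
  N.E.powerset.filter N.IsValidSwitching

/-- The set of leaves lying below the edge `e` inside the subgraph `F`. -/
noncomputable def clusterIn (F : Finset (V × V)) (e : V × V) : Finset X :=
  Finset.univ.filter fun x => ∃ p, IsPath F e.2 (N.leafOf x) p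

/-- Phylogenetic diversity of `S` in the tree displayed by the switching `F`
(the sum of the lengths of the edges of the minimal subtree spanning `S` and the root;
suppression of degree-two vertices merges edge lengths additively, so it is computed
on the unsuppressed switching). -/
noncomputable def PDdisp (F : Finset (V × V)) (S : Finset X) : ℝ :=
  ∑ e ∈ F.filter (fun e => (N.clusterIn F e ∩ S).Nonempty), N.len e

/-- Unscaled probability of the tree displayed by the switching `F`: the product of the
inheritance probabilities of the kept reticulation edges. -/
noncomputable def Punsc (F : Finset (V × V)) : ℝ :=
  ∏ e ∈ F.filter (fun e => inDeg N.E e.2 = 2), N.prob e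

/-- `v` is a vertex of the edge set `A`. -/
def vertexOf (A : Finset (V × V)) (v : V) : Prop := ∃ e ∈ A, e.1 = v ∨ e.2 = v

/-- `A` is an arborescence rooted at the root of `N` inside `N`: there is exactly one
directed path from the root to each of its vertices. -/
def IsArbor (A : Finset (V × V)) : Prop :=
  A ⊆ N.E ∧ ∀ v, vertexOf A v → (allPaths A N.root v).card = 1

/-- `A` contains all taxa of `S`. -/
def spans (A : Finset (V × V)) (S : Finset X) : Prop :=
  ∀ x ∈ S, vertexOf A (N.leafOf x)

/-- Phylogenetic net diversity: the weight of a minimum cost arborescence containing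
`S` and the root. -/
noncomputable def PND (S : Finset X) : ℝ :=
  sInf {w : ℝ | ∃ A, N.IsArbor A ∧ N.spans A S ∧ w = N.weight A}

/-- Phylogenetic subnet diversity: the total weight of the subgraph of `N` consisting of
all edges lying on some directed path from the root to a leaf of `S`. -/
noncomputable def PSD (S : Finset X) : ℝ :=
  ∑ e ∈ N.E.filter (fun e => ∃ x ∈ S, ∃ p, IsPath N.E N.root (N.leafOf x) p ∧ e ∈ p), N.len e

/-- Probability that the leaf `d` is a descendant of the node `v`: the sum of the
probabilities of all directed paths from `v` to `d`. -/
noncomputable def Pdesc (v : V) (d : X) : ℝ :=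
  ∑ p ∈ allPaths N.E v (N.leafOf d), N.pathProb p

/-- The set of leaves that are descendants of the edge `e`. -/
noncomputable def De (e : V × V) : Finset X :=
  Finset.univ.filter fun x => ∃ p, IsPath N.E e.2 (N.leafOf x) p

/-- Net Fair Proportion Index of the taxon `a`. -/
noncomputable def NFP (a : X) : ℝ :=
  ∑ p ∈ allPaths N.E N.root (N.leafOf a),
    N.pathProb p * (p.map (fun e => N.len e / ∑ d ∈ N.De e, N.Pdesc e.2 d)).sum

end PhyloNetwork

/-- The original Shapley Value of a set function `f` (with `f ∅ = 0`). -/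
noncomputable def shapley {X : Type*} [Fintype X] [DecidableEq X]
    (f : Finset X → ℝ) (a : X) : ℝ :=
  (1 / (Nat.factorial (Fintype.card X) : ℝ)) *
    ∑ S ∈ Finset.univ.powerset.filter (fun S : Finset X => a ∈ S),
      ((S.card - 1).factorial : ℝ) * ((Fintype.card X - S.card).factorial : ℝ) *
        (f S - f (S.erase a))

/-- The set of arborescences of `N` rooted at the root, containing all taxa of `S` and
whose dead ends are all leaves labeled by taxa of `S` (the arborescences spanning `S`
and the root). -/
noncomputable def PhyloNetwork.arborsSpanning {V X : Type*} [Fintype V] [DecidableEq V] [Fintype X] [DecidableEq X]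
    (N : PhyloNetwork V X) (S : Finset X) : Finset (Finset (V × V)) :=
  N.E.powerset.filter fun A => N.IsArbor A ∧ N.spans A S ∧
    ∀ v, PhyloNetwork.vertexOf A v → outDeg A v = 0 → ∃ x ∈ S, N.leafOf x = v

/-!
Pruning the tree displayed by a switching `F` to the edges above `S` yields an arborescence
spanning `S` and the root whose weight is `PD_F(S)`. A switching prunes to such an
arborescence `A` exactly when it contains `A`, and the unscaled probabilities of the
switchings containing `A` sum to `P(A)`: every reticulation left undecided by `A` contributes
a factor `γ + (1 - γ) = 1`. Grouping the displayed trees by their pruning therefore turns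
both the normalizer and the weighted sum over trees into the corresponding sums over
arborescences.
-/

section Paths

variable {V : Type*} {E F : Finset (V × V)} {u v w : V} {e : V × V} {p q : List (V × V)}

theorem IsPath.mono (h : E ⊆ F) (hp : IsPath E u v p) : IsPath F u v p := by
  induction p generalizing u with
  | nil => exact hp
  | cons e p ih => exact ⟨h hp.1, hp.2.1, ih hp.2.2⟩

theorem IsPath.of_forall_mem (hp : IsPath E u v p) (hF : ∀ e ∈ p, e ∈ F) : IsPath F u v p := by
  induction p generalizing u with
  | nil => exact hp
  | cons e p ih =>
    exact ⟨hF e List.mem_cons_self, hp.2.1, ih hp.2.2 fun f hf => hF f (List.mem_cons_of_mem _ hf)⟩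

theorem IsPath.mem (hp : IsPath E u v p) (he : e ∈ p) : e ∈ E := by
  induction p generalizing u with
  | nil => simp at he
  | cons f p ih =>
    rcases List.mem_cons.mp he with rfl | he
    exacts [hp.1, ih hp.2.2 he]

theorem isPath_append : IsPath E u w (p ++ q) ↔ ∃ v, IsPath E u v p ∧ IsPath E v w q := by
  induction p generalizing u with
  | nil => simp [IsPath]
  | cons e p ih => simp only [List.cons_append, IsPath, ih]; tauto

theorem isPath_append_singleton : IsPath E u v (p ++ [e]) ↔ IsPath E u e.1 p ∧ e ∈ E ∧ e.2 = v := by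
  simp [isPath_append, IsPath]

theorem IsPath.append (hp : IsPath E u v p) (hq : IsPath E v w q) : IsPath E u w (p ++ q) :=
  isPath_append.mpr ⟨v, hp, hq⟩

theorem IsPath.split (hp : IsPath E u v p) (he : e ∈ p) :
    ∃ q r, p = q ++ e :: r ∧ IsPath E u e.1 q ∧ e ∈ E ∧ IsPath E e.2 v r := by
  obtain ⟨q, r, rfl⟩ := List.append_of_mem he
  obtain ⟨w, hq, he, h1, hr⟩ := isPath_append.mp hp
  exact ⟨q, r, rfl, h1 ▸ hq, he, hr⟩

theorem exists_isPath_of_transGen (h : Relation.TransGen (fun a b => (a, b) ∈ E) u v) :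
    ∃ p ≠ [], IsPath E u v p := by
  induction h with
  | single h => exact ⟨_, List.cons_ne_nil _ [], h, rfl, rfl⟩
  | tail _ h ih =>
    obtain ⟨p, hp0, hp⟩ := ih
    exact ⟨p ++ [(_, _)], by simp, hp.append ⟨h, rfl, rfl⟩⟩

theorem mem_listsOf [DecidableEq V] {n : ℕ} :
    p ∈ listsOf E n ↔ p.length = n ∧ ∀ e ∈ p, e ∈ E := by
  induction n generalizing p with
  | zero => simp +contextual [listsOf]
  | succ n ih => cases p <;> simp [listsOf, ih]; tauto

theorem mem_allPaths [Fintype V] [DecidableEq V] :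
    p ∈ allPaths E u v ↔ IsPath E u v p ∧ p.length ≤ Fintype.card V := by
  simp only [allPaths, mem_filter, mem_biUnion, mem_range, mem_listsOf]
  exact ⟨fun ⟨⟨_, hn, rfl, _⟩, hp⟩ => ⟨hp, by omega⟩,
    fun ⟨hp, hl⟩ => ⟨⟨_, by omega, rfl, fun _ => hp.mem⟩, hp⟩⟩

theorem eq_of_inDeg_le_one [DecidableEq V] {f : V × V} (he : e ∈ E) (hf : f ∈ E) (h : e.2 = f.2)
    (hd : inDeg E e.2 ≤ 1) : e = f :=
  card_le_one.mp hd e (mem_filter.mpr ⟨he, rfl⟩) f (mem_filter.mpr ⟨hf, h.symm⟩)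

end Paths

def IsAcyclic {V : Type*} (E : Finset (V × V)) : Prop :=
  ∀ v p, p ≠ [] → ¬ IsPath E v v p

theorem wellFounded_of_not_transGen_self {V : Type*} [Finite V] {r : V → V → Prop}
    (h : ∀ v, ¬ Relation.TransGen r v v) : WellFounded r :=
  have : IsTrans V (Relation.TransGen r) := ⟨fun _ _ _ => Relation.TransGen.trans⟩
  have : Std.Irrefl (Relation.TransGen r) := ⟨h⟩
  Subrelation.wf Relation.TransGen.single (Finite.wellFounded_of_trans_of_irrefl _)

namespace IsAcyclic

variable {V : Type*} {E F : Finset (V × V)} {u v : V} {p q : List (V × V)}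

theorem mono (hE : IsAcyclic E) (h : F ⊆ E) : IsAcyclic F :=
  fun v p hp hc => hE v p hp (hc.mono h)

theorem nodup (hE : IsAcyclic E) (hp : IsPath E u v p) : (u :: p.map Prod.snd).Nodup := by
  induction p generalizing u with
  | nil => simp
  | cons e p ih =>
    refine List.nodup_cons.mpr ⟨fun hu => ?_, ih hp.2.2⟩
    obtain ⟨f, hf, rfl⟩ := List.mem_map.mp hu
    obtain ⟨q, r, -, hq, hfE, -⟩ := hp.split hf
    exact hE _ (q ++ [f]) (by simp) (isPath_append_singleton.mpr ⟨hq, hfE, rfl⟩)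

theorem mem_allPaths [Fintype V] [DecidableEq V] (hE : IsAcyclic E) :
    p ∈ allPaths E u v ↔ IsPath E u v p := by
  refine ⟨fun h => (_root_.mem_allPaths.mp h).1, fun hp => _root_.mem_allPaths.mpr ⟨hp, ?_⟩⟩
  have := (hE.nodup hp).length_le_card
  simp only [List.length_cons, List.length_map] at this
  omega

theorem wellFounded [Finite V] (hE : IsAcyclic E) : WellFounded fun a b => (a, b) ∈ E :=
  wellFounded_of_not_transGen_self fun v hv =>
    let ⟨p, hp0, hp⟩ := exists_isPath_of_transGen hv
    hE v p hp0 hp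

theorem wellFounded_swap [Finite V] (hE : IsAcyclic E) : WellFounded fun a b => (b, a) ∈ E :=
  wellFounded_of_not_transGen_self fun v hv =>
    let ⟨p, hp0, hp⟩ := exists_isPath_of_transGen (Relation.transGen_swap.mp hv)
    hE v p hp0 hp

/-- Trace both paths back from their common end. -/
theorem isPath_unique (hE : IsAcyclic E) (hinj : Set.InjOn Prod.snd (E : Set (V × V)))
    (hp : IsPath E u v p) (hq : IsPath E u v q) : p = q := by
  induction p using List.reverseRecOn generalizing v q with
  | nil =>
    obtain rfl : u = v := hp
    by_contra hq0
    exact hE u q (Ne.symm hq0) hq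
  | append_singleton p e ih =>
    obtain ⟨hp', he, rfl⟩ := isPath_append_singleton.mp hp
    rcases q.eq_nil_or_concat with rfl | ⟨q, f, rfl⟩
    · obtain rfl : u = e.2 := hq
      exact absurd hp (hE _ _ (by simp))
    · rw [List.concat_eq_append] at hq ⊢
      obtain ⟨hq', hf, hfe⟩ := isPath_append_singleton.mp hq
      obtain rfl := hinj hf he hfe
      rw [ih hp' hq']

theorem exists_isPath_of_outDeg_eq_zero [Fintype V] [DecidableEq V] (hE : IsAcyclic E)
    {P : V → Prop} (hP : ∀ v, PhyloNetwork.vertexOf E v → outDeg E v = 0 → P v)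
    {w : V} (hw : PhyloNetwork.vertexOf E w) : ∃ v, P v ∧ ∃ p, IsPath E w v p := by
  induction w using hE.wellFounded_swap.induction with
  | _ w ih =>
    by_cases h0 : outDeg E w = 0
    · exact ⟨w, hP w hw h0, [], rfl⟩
    obtain ⟨f, hf⟩ := card_pos.mp (Nat.pos_of_ne_zero h0)
    obtain ⟨hfE, rfl⟩ := mem_filter.mp hf
    obtain ⟨v, hv, p, hp⟩ := ih f.2 hfE ⟨f, hfE, Or.inr rfl⟩
    exact ⟨v, hv, f :: p, hfE, rfl, hp⟩

end IsAcyclic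

namespace PhyloNetwork

variable {V X : Type*} [Fintype V] [DecidableEq V] [Fintype X]
  (N : PhyloNetwork V X) {A F G : Finset (V × V)} {e : V × V} {u v w : V}

theorem isAcyclic : IsAcyclic N.E := N.acyclic

theorem snd_ne_root (he : e ∈ N.E) : e.2 ≠ N.root := by
  intro h
  have : 0 < inDeg N.E N.root := card_pos.mpr ⟨e, mem_filter.mpr ⟨he, h⟩⟩
  exact this.ne' N.root_in

theorem inDeg_eq_one_or_two (hv : v ≠ N.root) : inDeg N.E v = 1 ∨ inDeg N.E v = 2 := by
  by_cases h0 : outDeg N.E v = 0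
  · obtain ⟨x, rfl⟩ := (N.leaf_iff v).mp h0
    exact Or.inl (N.leaf_in x)
  · exact (N.internal v hv h0).imp And.left And.left

theorem isSwitching_iff : N.IsSwitching F ↔
    F ⊆ N.E ∧ Set.InjOn Prod.snd (F : Set (V × V)) ∧ ∀ v ≠ N.root, ∃ e ∈ F, e.2 = v := by
  refine ⟨fun ⟨hFE, hF⟩ => ⟨hFE, fun e he f hf h => ?_, fun v hv => ?_⟩,
    fun ⟨hFE, hinj, hF⟩ => ⟨hFE, fun v hv => ?_⟩⟩
  · exact eq_of_inDeg_le_one he hf h (hF e.2 (N.snd_ne_root (hFE he))).le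
  · obtain ⟨e, he⟩ := card_pos.mp ((hF v hv).symm ▸ Nat.one_pos)
    exact ⟨e, (mem_filter.mp he).1, (mem_filter.mp he).2⟩
  · obtain ⟨e, he, rfl⟩ := hF v hv
    refine card_eq_one.mpr ⟨e, eq_singleton_iff_unique_mem.mpr ⟨mem_filter.mpr ⟨he, rfl⟩, ?_⟩⟩
    exact fun f hf => hinj (mem_filter.mp hf).1 he (mem_filter.mp hf).2

namespace IsSwitching

variable {N}

theorem injOn (hF : N.IsSwitching F) : Set.InjOn Prod.snd (F : Set (V × V)) :=
  (N.isSwitching_iff.mp hF).2.1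

theorem exists_mem_snd_eq (hF : N.IsSwitching F) (hv : v ≠ N.root) : ∃ e ∈ F, e.2 = v :=
  (N.isSwitching_iff.mp hF).2.2 v hv

theorem eq_of_subset (hF : N.IsSwitching F) (hG : N.IsSwitching G) (h : F ⊆ G) : F = G := by
  refine h.antisymm fun g hg => ?_
  obtain ⟨f, hf, hfg⟩ := hF.exists_mem_snd_eq (N.snd_ne_root (hG.1 hg))
  exact hG.injOn (h hf) hg hfg ▸ hf

theorem exists_isPath (hF : N.IsSwitching F) (v : V) : ∃ p, IsPath F N.root v p := by
  induction v using N.isAcyclic.wellFounded.induction with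
  | _ v ih =>
    rcases eq_or_ne v N.root with rfl | hv
    · exact ⟨[], rfl⟩
    obtain ⟨e, he, rfl⟩ := hF.exists_mem_snd_eq hv
    obtain ⟨p, hp⟩ := ih e.1 (hF.1 he)
    exact ⟨p ++ [e], isPath_append_singleton.mpr ⟨hp, he, rfl⟩⟩

theorem sum_incoming_ite (hF : N.IsSwitching F) (hv : v ≠ N.root) (c : ℝ) :
    ∑ e ∈ N.E.filter (·.2 = v), (if e ∈ F then c else 0) = c := by
  have hinc : (N.E.filter (·.2 = v)).filter (· ∈ F) = F.filter (·.2 = v) := by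
    ext e
    simp only [mem_filter]
    exact ⟨fun ⟨⟨_, h⟩, he⟩ => ⟨he, h⟩, fun ⟨he, h⟩ => ⟨⟨hF.1 he, h⟩, he⟩⟩
  rw [← sum_filter, sum_const, hinc, hF.2 v hv, one_smul]

end IsSwitching

theorem isArbor_of_forall_exists_isPath (hAE : A ⊆ N.E)
    (hinj : Set.InjOn Prod.snd (A : Set (V × V)))
    (hpath : ∀ v, vertexOf A v → ∃ p, IsPath A N.root v p) : N.IsArbor A := by
  refine ⟨hAE, fun v hv => ?_⟩
  have hA := N.isAcyclic.mono hAE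
  obtain ⟨p, hp⟩ := hpath v hv
  exact card_eq_one.mpr ⟨p, eq_singleton_iff_unique_mem.mpr
    ⟨hA.mem_allPaths.mpr hp, fun q hq => hA.isPath_unique hinj (hA.mem_allPaths.mp hq) hp⟩⟩

namespace IsArbor

variable {N}

theorem exists_isPath (hA : N.IsArbor A) (hv : vertexOf A v) : ∃ p, IsPath A N.root v p := by
  obtain ⟨p, hp⟩ := card_pos.mp ((hA.2 v hv).symm ▸ Nat.one_pos)
  exact ⟨p, ((N.isAcyclic.mono hA.1).mem_allPaths).mp hp⟩

theorem injOn (hA : N.IsArbor A) : Set.InjOn Prod.snd (A : Set (V × V)) := by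
  intro e he f hf h
  obtain ⟨p, hp⟩ := hA.exists_isPath ⟨e, he, Or.inl rfl⟩
  obtain ⟨q, hq⟩ := hA.exists_isPath ⟨f, hf, Or.inl rfl⟩
  have hacyc := N.isAcyclic.mono hA.1
  have hpq : p ++ [e] = q ++ [f] := card_le_one.mp (hA.2 e.2 ⟨e, he, Or.inr rfl⟩).le _
    (hacyc.mem_allPaths.mpr (isPath_append_singleton.mpr ⟨hp, he, rfl⟩)) _
    (hacyc.mem_allPaths.mpr (isPath_append_singleton.mpr ⟨hq, hf, h.symm⟩))
  exact List.singleton_inj.mp (List.append_inj' hpq rfl).2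

end IsArbor

section Prune

variable [DecidableEq X] (S : Finset X)

/-- For a switching `F`, the subtree of the displayed tree spanning `S` and the root. -/
noncomputable def prune (F : Finset (V × V)) : Finset (V × V) :=
  F.filter fun e => (N.clusterIn F e ∩ S).Nonempty

theorem PDdisp_eq_weight_prune : N.PDdisp F S = N.weight (N.prune S F) := rfl

variable {N S}

theorem mem_prune : e ∈ N.prune S F ↔ e ∈ F ∧ ∃ x ∈ S, ∃ p, IsPath F e.2 (N.leafOf x) p := by
  simp only [prune, clusterIn, mem_filter, Finset.Nonempty, mem_inter, mem_univ, true_and]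
  exact and_congr_right fun _ => ⟨fun ⟨x, hp, hx⟩ => ⟨x, hx, hp⟩, fun ⟨x, hx, hp⟩ => ⟨x, hp, hx⟩⟩

theorem prune_subset : N.prune S F ⊆ F := filter_subset _ _

theorem isPath_prune {p : List (V × V)} (hp : IsPath F u v p)
    (hv : ∃ x ∈ S, ∃ r, IsPath F v (N.leafOf x) r) : IsPath (N.prune S F) u v p := by
  obtain ⟨x, hx, r, hr⟩ := hv
  refine hp.of_forall_mem fun e he => mem_prune.mpr ⟨hp.mem he, x, hx, ?_⟩
  obtain ⟨-, s, -, -, -, hs⟩ := hp.split he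
  exact ⟨s ++ r, hs.append hr⟩

theorem exists_isPath_leaf_of_vertexOf_prune (hw : vertexOf (N.prune S F) w) :
    ∃ x ∈ S, ∃ p, IsPath F w (N.leafOf x) p := by
  obtain ⟨e, he, rfl | rfl⟩ := hw <;> obtain ⟨heF, x, hx, p, hp⟩ := mem_prune.mp he
  exacts [⟨x, hx, e :: p, heF, rfl, hp⟩, ⟨x, hx, p, hp⟩]

theorem mem_arborsSpanning : A ∈ N.arborsSpanning S ↔ N.IsArbor A ∧ N.spans A S ∧
    ∀ v, vertexOf A v → outDeg A v = 0 → ∃ x ∈ S, N.leafOf x = v := by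
  simp only [arborsSpanning, mem_filter, mem_powerset, and_iff_right_iff_imp]
  exact fun h => h.1.1

theorem IsSwitching.prune_mem_arborsSpanning (hF : N.IsSwitching F) :
    N.prune S F ∈ N.arborsSpanning S := by
  have hPF : N.prune S F ⊆ F := prune_subset
  refine mem_arborsSpanning.mpr ⟨?_, fun x hx => ?_, fun v hv h0 => ?_⟩
  · refine N.isArbor_of_forall_exists_isPath (hPF.trans hF.1) (hF.injOn.mono hPF) fun v hv => ?_
    obtain ⟨p, hp⟩ := hF.exists_isPath v
    exact ⟨p, isPath_prune hp (exists_isPath_leaf_of_vertexOf_prune hv)⟩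
  · have hx_root : N.leafOf x ≠ N.root := fun h => by simpa [h, N.root_in] using N.leaf_in x
    obtain ⟨e, he, he2⟩ := hF.exists_mem_snd_eq hx_root
    exact ⟨e, mem_prune.mpr ⟨he, x, hx, [], he2⟩, Or.inr he2⟩
  · obtain ⟨x, hx, p, hp⟩ := exists_isPath_leaf_of_vertexOf_prune hv
    cases p with
    | nil => exact ⟨x, hx, hp.symm⟩
    | cons f p =>
      obtain ⟨hf, rfl, hp⟩ := hp
      have hf' : f ∈ (N.prune S F).filter (·.1 = f.1) :=
        mem_filter.mpr ⟨mem_prune.mpr ⟨hf, x, hx, p, hp⟩, rfl⟩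
      exact absurd h0 (card_pos.mpr ⟨f, hf'⟩).ne'

/-- A path of `A` from the root to a taxon of `S` is the unique such path in `F`. -/
theorem IsSwitching.prune_eq_iff_subset (hF : N.IsSwitching F) (hA : A ∈ N.arborsSpanning S) :
    N.prune S F = A ↔ A ⊆ F := by
  obtain ⟨hArb, hspans, hdead⟩ := mem_arborsSpanning.mp hA
  refine ⟨fun h => h ▸ prune_subset, fun hAF => Subset.antisymm (fun e he => ?_) fun e he => ?_⟩
  · obtain ⟨heF, x, hx, p, hp⟩ := mem_prune.mp he
    obtain ⟨q, hq⟩ := hF.exists_isPath e.1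
    obtain ⟨r, hr⟩ := hArb.exists_isPath (hspans x hx)
    have hrq : r = q ++ e :: p := (N.isAcyclic.mono hF.1).isPath_unique hF.injOn
      (hr.mono hAF) (hq.append ⟨heF, rfl, hp⟩)
    exact hr.mem (hrq ▸ List.mem_append_right _ List.mem_cons_self)
  · obtain ⟨_, ⟨x, hx, rfl⟩, p, hp⟩ := (N.isAcyclic.mono hArb.1).exists_isPath_of_outDeg_eq_zero
      hdead (w := e.2) ⟨e, he, Or.inr rfl⟩
    exact mem_prune.mpr ⟨hAF he, x, hx, p, hp.mono hAF⟩

end Prune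

theorem mem_displayed (hall : ∀ F, N.IsSwitching F → N.IsValidSwitching F) :
    F ∈ N.displayed ↔ N.IsSwitching F :=
  ⟨fun h => (mem_filter.mp h).2.1, fun h => mem_filter.mpr ⟨mem_powerset.mpr h.1, hall F h⟩⟩

noncomputable def undecided (A : Finset (V × V)) : Finset V :=
  univ.filter fun v => inDeg N.E v = 2 ∧ ∀ e ∈ A, e.2 ≠ v

theorem undecided_insert (he : e.2 = v) : N.undecided (insert e A) = (N.undecided A).erase v := by
  ext w
  simp only [undecided, mem_erase, mem_filter, mem_univ, true_and, forall_mem_insert, he]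
  tauto

theorem Punsc_insert (he : inDeg N.E e.2 = 2) (heA : e ∉ A) :
    N.Punsc (insert e A) = N.prob e * N.Punsc A := by
  rw [Punsc, filter_insert, if_pos he, prod_insert fun h => heA (mem_filter.mp h).1]
  rfl

noncomputable def treeEdges : Finset (V × V) :=
  N.E.filter fun e => inDeg N.E e.2 = 1

theorem IsSwitching.treeEdges_subset (hF : N.IsSwitching F) : N.treeEdges ⊆ F := by
  intro m hm
  obtain ⟨hmE, hm1⟩ := mem_filter.mp hm
  obtain ⟨g, hg, hgm⟩ := hF.exists_mem_snd_eq (N.snd_ne_root hmE)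
  exact eq_of_inDeg_le_one (hF.1 hg) hmE hgm (hgm ▸ hm1.le) ▸ hg

theorem isSwitching_union_treeEdges (hAE : A ⊆ N.E) (hinj : Set.InjOn Prod.snd (A : Set (V × V)))
    (hcover : ∀ v, inDeg N.E v = 2 → ∃ e ∈ A, e.2 = v) : N.IsSwitching (A ∪ N.treeEdges) := by
  have hE : A ∪ N.treeEdges ⊆ N.E := union_subset hAE (filter_subset _ _)
  refine N.isSwitching_iff.mpr ⟨hE, fun e he f hf h => ?_, fun v hv => ?_⟩
  · by_cases h1 : inDeg N.E e.2 = 1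
    · exact eq_of_inDeg_le_one (hE he) (hE hf) h h1.le
    have hA : ∀ {g}, g ∈ A ∪ N.treeEdges → g.2 = e.2 → g ∈ A := fun hg hge =>
      (mem_union.mp hg).resolve_right fun hgT => h1 (hge ▸ (mem_filter.mp hgT).2)
    exact hinj (hA he rfl) (hA hf h.symm) h
  · rcases N.inDeg_eq_one_or_two hv with h1 | h2
    · obtain ⟨m, hm⟩ := card_eq_one.mp h1
      obtain ⟨hmE, rfl⟩ := mem_filter.mp (hm ▸ mem_singleton_self m)
      exact ⟨m, mem_union_right _ (mem_filter.mpr ⟨hmE, h1⟩), rfl⟩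
    · obtain ⟨e, he, rfl⟩ := hcover v h2
      exact ⟨e, mem_union_left _ he, rfl⟩

theorem displayed_filter_superset_eq_singleton
    (hall : ∀ F, N.IsSwitching F → N.IsValidSwitching F) (hAE : A ⊆ N.E)
    (hinj : Set.InjOn Prod.snd (A : Set (V × V)))
    (hcover : ∀ v, inDeg N.E v = 2 → ∃ e ∈ A, e.2 = v) :
    N.displayed.filter (A ⊆ ·) = {A ∪ N.treeEdges} := by
  have hsw := N.isSwitching_union_treeEdges hAE hinj hcover
  ext F
  rw [mem_filter, mem_singleton, N.mem_displayed hall]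
  refine ⟨fun ⟨hF, hAF⟩ => (hsw.eq_of_subset hF ?_).symm, fun h => h ▸ ⟨hsw, subset_union_left⟩⟩
  exact union_subset hAF hF.treeEdges_subset

theorem Punsc_union_treeEdges : N.Punsc (A ∪ N.treeEdges) = N.Punsc A := by
  rw [Punsc, treeEdges, filter_union, filter_filter,
    filter_false_of_mem (s := N.E) fun e _ h => by omega, union_empty]
  rfl

/-- Summing over the choices at one undecided reticulation contributes `γ + (1 - γ) = 1`. -/
theorem sum_Punsc_displayed_superset (hall : ∀ F, N.IsSwitching F → N.IsValidSwitching F)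
    (hAE : A ⊆ N.E) (hinj : Set.InjOn Prod.snd (A : Set (V × V))) :
    ∑ F ∈ N.displayed.filter (A ⊆ ·), N.Punsc F = N.Punsc A := by
  induction hn : (N.undecided A).card generalizing A with
  | zero =>
    have hcover : ∀ v, inDeg N.E v = 2 → ∃ e ∈ A, e.2 = v := fun v hv => by
      by_contra! h
      exact notMem_empty v (card_eq_zero.mp hn ▸ mem_filter.mpr ⟨mem_univ v, hv, h⟩)
    rw [N.displayed_filter_superset_eq_singleton hall hAE hinj hcover, sum_singleton,
      Punsc_union_treeEdges]
  | succ n ih =>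
    obtain ⟨v, hv⟩ := card_pos.mp (hn ▸ n.succ_pos : 0 < (N.undecided A).card)
    obtain ⟨hv2, hvA⟩ := (mem_filter.mp hv).2
    have hvroot : v ≠ N.root := fun h => by simp [h, N.root_in] at hv2
    have hstep : ∀ e ∈ N.E.filter (·.2 = v), ∑ F ∈ N.displayed.filter (insert e A ⊆ ·), N.Punsc F =
        N.prob e * N.Punsc A := by
      intro e he
      obtain ⟨heE, rfl⟩ := mem_filter.mp he
      have heA : e ∉ A := fun h => hvA e h rfl
      rw [← N.Punsc_insert hv2 heA]
      refine ih (insert_subset heE hAE) ?_ ?_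
      · rw [coe_insert, Set.injOn_insert (by simpa using heA)]
        exact ⟨hinj, fun ⟨f, hf, hfe⟩ => hvA f hf hfe⟩
      · rw [N.undecided_insert rfl, card_erase_of_mem hv, hn, Nat.add_sub_cancel]
    calc ∑ F ∈ N.displayed.filter (A ⊆ ·), N.Punsc F
        = ∑ F ∈ N.displayed.filter (A ⊆ ·),
            ∑ e ∈ N.E.filter (·.2 = v), (if e ∈ F then N.Punsc F else 0) :=
          sum_congr rfl fun F hF =>
            (((N.mem_displayed hall).mp (mem_filter.mp hF).1).sum_incoming_ite hvroot _).symm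
      _ = ∑ e ∈ N.E.filter (·.2 = v), ∑ F ∈ N.displayed.filter (insert e A ⊆ ·), N.Punsc F := by
          rw [sum_comm]
          refine sum_congr rfl fun e _ => ?_
          rw [← sum_filter, filter_filter]
          simp only [insert_subset_iff, and_comm]
      _ = ∑ e ∈ N.E.filter (·.2 = v), N.prob e * N.Punsc A := sum_congr rfl hstep
      _ = N.Punsc A := by rw [← sum_mul, N.prob_sum v hv2, one_mul]

theorem sum_displayed_Punsc_mul_prune [DecidableEq X]
    (hall : ∀ F, N.IsSwitching F → N.IsValidSwitching F) (S : Finset X) (g : Finset (V × V) → ℝ) :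
    ∑ F ∈ N.displayed, N.Punsc F * g (N.prune S F) = ∑ A ∈ N.arborsSpanning S, N.Punsc A * g A := by
  rw [← sum_fiberwise_of_maps_to fun F hF =>
    ((N.mem_displayed hall).mp hF).prune_mem_arborsSpanning (S := S)]
  refine sum_congr rfl fun A hA => ?_
  have hfiber : N.displayed.filter (N.prune S · = A) = N.displayed.filter (A ⊆ ·) :=
    filter_congr fun F hF => ((N.mem_displayed hall).mp hF).prune_eq_iff_subset hA
  obtain ⟨hArb, -⟩ := mem_arborsSpanning.mp hA
  calc ∑ F ∈ N.displayed.filter (N.prune S · = A), N.Punsc F * g (N.prune S F)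
      = (∑ F ∈ N.displayed.filter (A ⊆ ·), N.Punsc F) * g A := by
        rw [sum_mul, ← hfiber]
        exact sum_congr rfl fun F hF => by rw [(mem_filter.mp hF).2]
    _ = N.Punsc A * g A := by rw [N.sum_Punsc_displayed_superset hall hArb.1 hArb.injOn]

end PhyloNetwork

/-- if every combination of reticulation-edge deletions yields a
phylogenetic `X`-tree (so `|T(N)| = 2 ^ k`), then the inheritance-weighted phylogenetic
net diversity (the probability-weighted average, suitably normalized, of the weights
of the arborescences spanning `S` and the root) equals the inheritance-weighted average
embedded phylogenetic diversity. -/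
theorem PNDinh_eq_weighted_embedded_PD {V X : Type*} [Fintype V] [DecidableEq V] [Fintype X] [DecidableEq X] (N : PhyloNetwork V X)
    (hall : ∀ F, N.IsSwitching F → N.IsValidSwitching F) (S : Finset X) :
    ∑ A ∈ N.arborsSpanning S,
        (N.Punsc A / ∑ B ∈ N.arborsSpanning S, N.Punsc B) * N.weight A
      = ∑ F ∈ N.displayed,
          (N.Punsc F / ∑ G ∈ N.displayed, N.Punsc G) * N.PDdisp F S := by
  have hnormalizer := N.sum_displayed_Punsc_mul_prune hall S fun _ => 1
  have hweighted := N.sum_displayed_Punsc_mul_prune hall S N.weight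
  simp only [mul_one] at hnormalizer
  simp only [div_mul_eq_mul_div, ← sum_div, PhyloNetwork.PDdisp_eq_weight_prune, hnormalizer,
    hweighted]
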